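/- Sensitivity of regularized ERM: let D and D' be datasets of size n differing in exactly one data point, each point satisfying ‖x_i‖ ≤ 1 and |y_i| = 1, and let L be convex and differentiable with |L'| ≤ 1. Let f and f' be the minimizers of Z(·|D) and Z(·|D') where Z(g|D) = (C₁/n)∑ L(y_i⟪g,x_i⟫) + (ρ/2)‖g‖². Then ‖f − f'‖ ≤ 2C₁/(n·ρ). -/

import Mathlib

/-!
The objective `Z(·|D)` is `ρ`-strongly convex, so its minimizer `f` satisfies the quadratic growth
bound `Z(f|D) + ρ/2 ‖f - g‖² ≤ Z(g|D)`, and likewise for `D'`. Adding the two bounds at `g = f'`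
and `g = f` gives `ρ ‖f - f'‖² ≤ Δ f' - Δ f` with `Δ = Z(·|D) - Z(·|D')`. Only the `s`-th loss
terms survive in `Δ`, and each is `1`-Lipschitz, so `Δ` is `2C₁/n`-Lipschitz and
`ρ ‖f - f'‖² ≤ (2C₁/n) ‖f - f'‖`.
-/

open RealInnerProductSpace Set Filter Topology
open scoped NNReal

section StrongConvexity

variable {E : Type*} [NormedAddCommGroup E] [NormedSpace ℝ E]

theorem UniformConvexOn.add_le_of_isMinOn {s : Set E} {φ : ℝ → ℝ} {F : E → ℝ} {x y : E}
    (hF : UniformConvexOn s φ F) (hmin : IsMinOn F s x) (hx : x ∈ s) (hy : y ∈ s) :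
    F x + φ ‖x - y‖ ≤ F y := by
  have hseg : ∀ t ∈ Ioo (0 : ℝ) 1, F x + (1 - t) * φ ‖x - y‖ ≤ F y := by
    rintro t ⟨ht₀, ht₁⟩
    have hab : (1 - t) + t = 1 := sub_add_cancel 1 t
    have hconv := hF.2 hx hy (sub_nonneg.2 ht₁.le) ht₀.le hab
    have hle : F x ≤ F ((1 - t) • x + t • y) :=
      hmin (hF.1 hx hy (sub_nonneg.2 ht₁.le) ht₀.le hab)
    simp only [smul_eq_mul] at hconv
    refine le_of_mul_le_mul_left ?_ ht₀
    linarith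
  have hlim : Tendsto (fun t : ℝ ↦ F x + (1 - t) * φ ‖x - y‖) (𝓝[>] 0)
      (𝓝 (F x + φ ‖x - y‖)) := by
    have hcont : Continuous fun t : ℝ ↦ F x + (1 - t) * φ ‖x - y‖ := by fun_prop
    simpa using (hcont.tendsto 0).mono_left nhdsWithin_le_nhds
  exact le_of_tendsto hlim (eventually_of_mem (Ioo_mem_nhdsGT one_pos) hseg)

theorem norm_sub_le_of_isMinOn_of_lipschitzOnWith_sub {s : Set E} {F G : E → ℝ} {m : ℝ}
    {K : ℝ≥0} {f g : E} (hm : 0 < m) (hF : StrongConvexOn s m F) (hG : StrongConvexOn s m G)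
    (hFG : LipschitzOnWith K (F - G) s) (hf : IsMinOn F s f) (hg : IsMinOn G s g)
    (hfs : f ∈ s) (hgs : g ∈ s) :
    ‖f - g‖ ≤ K / m := by
  have h₁ : F f + m / 2 * ‖f - g‖ ^ 2 ≤ F g := UniformConvexOn.add_le_of_isMinOn hF hf hfs hgs
  have h₂ : G g + m / 2 * ‖f - g‖ ^ 2 ≤ G f := by
    simpa [norm_sub_rev] using UniformConvexOn.add_le_of_isMinOn hG hg hgs hfs
  have h₃ : (F g - G g) - (F f - G f) ≤ K * ‖f - g‖ := by
    have := hFG.dist_le_mul g hgs f hfs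
    rw [Real.dist_eq, dist_comm, dist_eq_norm] at this
    exact (le_abs_self _).trans this
  have h₄ : m * ‖f - g‖ ^ 2 ≤ K * ‖f - g‖ := by linarith
  rcases (norm_nonneg (f - g)).eq_or_lt with h₀ | hpos
  · rw [← h₀]; positivity
  · rw [le_div_iff₀ hm]
    nlinarith

end StrongConvexity

section InnerProduct

variable {E : Type*} [NormedAddCommGroup E] [InnerProductSpace ℝ E]

theorem convexOn_sum {ι : Type*} (t : Finset ι) {s : Set E} {F : ι → E → ℝ}
    (hs : Convex ℝ s) (hF : ∀ i ∈ t, ConvexOn ℝ s (F i)) :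
    ConvexOn ℝ s fun g ↦ ∑ i ∈ t, F i g := by
  simp_rw [← Finset.sum_apply]
  exact Finset.sum_induction _ (ConvexOn ℝ s) (fun _ _ ↦ ConvexOn.add) (convexOn_const 0 hs) hF

theorem ConvexOn.comp_mul_inner {L : ℝ → ℝ} (hL : ConvexOn ℝ univ L) (x : E) (y : ℝ) :
    ConvexOn ℝ univ fun g : E ↦ L (y * ⟪g, x⟫) := by
  simp_rw [real_inner_comm x]
  simpa [Function.comp_def] using
    hL.comp_linearMap ((y • innerSL ℝ x : E →L[ℝ] ℝ) : E →ₗ[ℝ] ℝ)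

theorem lipschitzWith_mul_inner {x : E} {y : ℝ} (hx : ‖x‖ ≤ 1) (hy : |y| ≤ 1) :
    LipschitzWith 1 fun g : E ↦ y * ⟪g, x⟫ :=
  LipschitzWith.of_dist_le_mul fun a b ↦ by
    rw [Real.dist_eq, ← mul_sub, ← inner_sub_left, abs_mul, dist_eq_norm, NNReal.coe_one,
      one_mul]
    calc |y| * |⟪a - b, x⟫| ≤ 1 * (‖a - b‖ * 1) :=
          mul_le_mul hy ((abs_real_inner_le_norm _ _).trans
            (mul_le_mul_of_nonneg_left hx (norm_nonneg _))) (abs_nonneg _) zero_le_one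
      _ = ‖a - b‖ := by ring

/-- `Z(g|D)` for the data set `D = ((x i, y i))ᵢ`. -/
noncomputable def ermObjective {n : ℕ} (C₁ ρ : ℝ) (L : ℝ → ℝ) (x : Fin n → E) (y : Fin n → ℝ)
    (g : E) : ℝ :=
  (C₁ / n) * ∑ i, L (y i * ⟪g, x i⟫) + (ρ / 2) * ‖g‖ ^ 2

variable {n : ℕ} {C₁ ρ : ℝ} {L : ℝ → ℝ}

theorem strongConvexOn_ermObjective (hC₁ : 0 ≤ C₁) (hL : ConvexOn ℝ univ L)
    (x : Fin n → E) (y : Fin n → ℝ) :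
    StrongConvexOn univ ρ (ermObjective C₁ ρ L x y) := by
  rw [strongConvexOn_iff_convex]
  simp only [ermObjective, add_sub_cancel_right]
  exact (convexOn_sum _ convex_univ fun i _ ↦ hL.comp_mul_inner (x i) (y i)).smul
    (div_nonneg hC₁ n.cast_nonneg)

theorem ermObjective_sub_ermObjective {x x' : Fin n → E} {y y' : Fin n → ℝ} {s : Fin n}
    (hdiff : ∀ i, i ≠ s → x i = x' i ∧ y i = y' i) (g : E) :
    ermObjective C₁ ρ L x y g - ermObjective C₁ ρ L x' y' g =
      C₁ / n * (L (y s * ⟪g, x s⟫) - L (y' s * ⟪g, x' s⟫)) := by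
  have hsum : ∑ i, L (y i * ⟪g, x i⟫) - ∑ i, L (y' i * ⟪g, x' i⟫) =
      L (y s * ⟪g, x s⟫) - L (y' s * ⟪g, x' s⟫) := by
    rw [← Finset.sum_sub_distrib]
    refine Finset.sum_eq_single_of_mem s (Finset.mem_univ s) fun i _ his ↦ ?_
    rw [(hdiff i his).1, (hdiff i his).2, sub_self]
  simp only [ermObjective, ← hsum]
  ring

theorem lipschitzWith_ermObjective_sub (hL : LipschitzWith 1 L) {x x' : Fin n → E}
    {y y' : Fin n → ℝ} {s : Fin n} (hx : ‖x s‖ ≤ 1) (hx' : ‖x' s‖ ≤ 1) (hy : |y s| ≤ 1)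
    (hy' : |y' s| ≤ 1) (hdiff : ∀ i, i ≠ s → x i = x' i ∧ y i = y' i) :
    LipschitzWith (2 * ‖C₁ / n‖₊)
      (ermObjective C₁ ρ L x y - ermObjective C₁ ρ L x' y') := by
  have hloss := (hL.comp (lipschitzWith_mul_inner hx hy)).sub
    (hL.comp (lipschitzWith_mul_inner hx' hy'))
  have hΔ : ermObjective C₁ ρ L x y - ermObjective C₁ ρ L x' y' =
      ((C₁ / n : ℝ) • ·) ∘ fun g ↦ L (y s * ⟪g, x s⟫) - L (y' s * ⟪g, x' s⟫) :=
    funext fun g ↦ ermObjective_sub_ermObjective hdiff g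
  rw [hΔ]
  exact ((lipschitzWith_smul (C₁ / n : ℝ)).comp hloss).weaken (by rw [mul_comm]; norm_num)

end InnerProduct

theorem erm_sensitivity_general (d n : ℕ) (C₁ ρ : ℝ) (hC₁ : 0 < C₁) (hρ : 0 < ρ)
    (L : ℝ → ℝ) (hLconv : ConvexOn ℝ Set.univ L) (hLdiff : Differentiable ℝ L)
    (hL' : ∀ z, |deriv L z| ≤ 1)
    (x x' : Fin n → EuclideanSpace ℝ (Fin d)) (y y' : Fin n → ℝ)
    (hx : ∀ i, ‖x i‖ ≤ 1) (hx' : ∀ i, ‖x' i‖ ≤ 1)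
    (hy : ∀ i, |y i| = 1) (hy' : ∀ i, |y' i| = 1)
    (s : Fin n) (hdiff : ∀ i, i ≠ s → x i = x' i ∧ y i = y' i)
    (f f' : EuclideanSpace ℝ (Fin d))
    (hf : ∀ g, (C₁ / n) * ∑ i, L (y i * ⟪f, x i⟫) + (ρ / 2) * ‖f‖ ^ 2 ≤
      (C₁ / n) * ∑ i, L (y i * ⟪g, x i⟫) + (ρ / 2) * ‖g‖ ^ 2)
    (hf' : ∀ g, (C₁ / n) * ∑ i, L (y' i * ⟪f', x' i⟫) + (ρ / 2) * ‖f'‖ ^ 2 ≤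
      (C₁ / n) * ∑ i, L (y' i * ⟪g, x' i⟫) + (ρ / 2) * ‖g‖ ^ 2) :
    ‖f - f'‖ ≤ 2 * C₁ / (n * ρ) := by
  have hL : LipschitzWith 1 L := lipschitzWith_of_nnnorm_deriv_le hLdiff fun z ↦ by
    simpa [← NNReal.coe_le_coe, Real.norm_eq_abs] using hL' z
  have hΔ := lipschitzWith_ermObjective_sub (C₁ := C₁) (ρ := ρ) hL (hx s) (hx' s)
    (hy s).le (hy' s).le hdiff
  calc ‖f - f'‖ ≤ (2 * ‖C₁ / n‖₊ : ℝ≥0) / ρ :=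
        norm_sub_le_of_isMinOn_of_lipschitzOnWith_sub hρ
          (strongConvexOn_ermObjective hC₁.le hLconv x y)
          (strongConvexOn_ermObjective hC₁.le hLconv x' y') hΔ.lipschitzOnWith
          (fun g _ ↦ hf g) (fun g _ ↦ hf' g) (mem_univ f) (mem_univ f')
    _ = 2 * C₁ / (n * ρ) := by
        rw [NNReal.coe_mul, coe_nnnorm, Real.norm_of_nonneg (by positivity)]
        push_cast
        ring

theorem erm_sensitivity (d n : ℕ) (hn : 0 < n) (C₁ ρ : ℝ) (hC₁ : 0 < C₁) (hρ : 0 < ρ)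
    (L : ℝ → ℝ) (hLconv : ConvexOn ℝ Set.univ L) (hLdiff : Differentiable ℝ L)
    (hL' : ∀ z, |deriv L z| ≤ 1)
    (x x' : Fin n → EuclideanSpace ℝ (Fin d)) (y y' : Fin n → ℝ)
    (hx : ∀ i, ‖x i‖ ≤ 1) (hx' : ∀ i, ‖x' i‖ ≤ 1)
    (hy : ∀ i, |y i| = 1) (hy' : ∀ i, |y' i| = 1)
    (s : Fin n) (hdiff : ∀ i, i ≠ s → x i = x' i ∧ y i = y' i)
    (f f' : EuclideanSpace ℝ (Fin d))
    (hf : ∀ g, (C₁ / n) * ∑ i, L (y i * ⟪f, x i⟫) + (ρ / 2) * ‖f‖ ^ 2 ≤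
      (C₁ / n) * ∑ i, L (y i * ⟪g, x i⟫) + (ρ / 2) * ‖g‖ ^ 2)
    (hf' : ∀ g, (C₁ / n) * ∑ i, L (y' i * ⟪f', x' i⟫) + (ρ / 2) * ‖f'‖ ^ 2 ≤
      (C₁ / n) * ∑ i, L (y' i * ⟪g, x' i⟫) + (ρ / 2) * ‖g‖ ^ 2) :
    ‖f - f'‖ ≤ 2 * C₁ / (n * ρ) :=
  erm_sensitivity_general d n C₁ ρ hC₁ hρ L hLconv hLdiff hL' x x' y y' hx hx' hy hy' s hdiff f f'
    hf hf'
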